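/- Let (C•, d) be a finite-dimensional Hilbert cochain complex, i.e. finite-dimensional complex inner product spaces C⁰, …, Cⁿ with linear maps d_p : C^p → C^{p+1} satisfying d_{p+1} ∘ d_p = 0. Let Δ_p = d_p* d_p + d_{p-1} d_{p-1}* be the Laplacians. Then for every t > 0 the McKean–Singer formula holds: Σ_p (−1)^p Tr(exp(−t Δ_p)) = Σ_p (−1)^p dim H^p(C•, d), where H^p = ker d_p / im d_{p−1}. -/

import Mathlib

/-- The Laplacians `Δ_p = d_p* d_p + d_{p-1} d_{p-1}*` of a finite-dimensional Hilbert
cochain complex (with the convention `d_{-1} = 0`). -/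
noncomputable def Lap (C : ℕ → Type) [∀ p, NormedAddCommGroup (C p)]
    [∀ p, InnerProductSpace ℂ (C p)] [∀ p, FiniteDimensional ℂ (C p)]
    (d : ∀ p, C p →ₗ[ℂ] C (p + 1)) : ∀ p, C p →ₗ[ℂ] C p
  | 0 => LinearMap.adjoint (d 0) ∘ₗ d 0
  | (p + 1) => LinearMap.adjoint (d (p + 1)) ∘ₗ d (p + 1) + d p ∘ₗ LinearMap.adjoint (d p)

/-- `dim H^p(C•,d)` where `H^p = ker d_p / im d_{p-1}` (and `H^0 = ker d_0`). -/
noncomputable def hdim (C : ℕ → Type) [∀ p, NormedAddCommGroup (C p)]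
    [∀ p, InnerProductSpace ℂ (C p)] [∀ p, FiniteDimensional ℂ (C p)]
    (d : ∀ p, C p →ₗ[ℂ] C (p + 1)) : ℕ → ℕ
  | 0 => Module.finrank ℂ (LinearMap.ker (d 0))
  | (p + 1) =>
      Module.finrank ℂ
        (↥(LinearMap.ker (d (p + 1))) ⧸
          Submodule.comap (LinearMap.ker (d (p + 1))).subtype (LinearMap.range (d p)))

/-- `Tr (exp (-t T))` for an endomorphism of a finite-dimensional space. -/
noncomputable def heatTr {E : Type} [NormedAddCommGroup E] [InnerProductSpace ℂ E]
    [FiniteDimensional ℂ E] (T : E →ₗ[ℂ] E) (t : ℝ) : ℂ :=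
  LinearMap.trace ℂ E
    (NormedSpace.exp ((-(t : ℂ)) • LinearMap.toContinuousLinearMap T)).toLinearMap

/-! The exponential series gives `Tr e^{-tT} = ∑ₖ (-t)ᵏ Tr (Tᵏ) / k!`, whose `k = 0` term is
`dim E`. For `k ≥ 1` we have `Tr ((A + B)ᵏ) = Tr (Aᵏ) + Tr (Bᵏ)` when `AB = BA = 0`, and
`Tr ((g f)ᵏ) = Tr ((f g)ᵏ)`. Since `d² = 0`, the two halves of `Δ_p` annihilate each other, so
`Tr e^{-tΔ_p} - dim C^p = ρ_p + ρ_{p-1}` with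
`ρ_p = Tr e^{-t d_p* d_p} - dim C^p = Tr e^{-t d_p d_p*} - dim C^{p+1}`. Likewise
`dim C^p - dim H^p = rk d_p + rk d_{p-1}`. Both alternating sums telescope, to `± ρ_n` and
`± rk d_n`, which vanish because `C^{n+1} = 0`. -/

open LinearMap Module Finset

theorem LinearMap.comp_pow_succ {R M N : Type*} [Semiring R] [AddCommMonoid M] [Module R M]
    [AddCommMonoid N] [Module R N] (f : M →ₗ[R] N) (g : N →ₗ[R] M) (k : ℕ) :
    (g ∘ₗ f) ^ (k + 1) = g ∘ₗ (((f ∘ₗ g) ^ k) ∘ₗ f) := by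
  induction k with
  | zero => rfl
  | succ k ih =>
    rw [pow_succ', ih, pow_succ']
    rfl

theorem LinearMap.trace_comp_pow_comm {R M N : Type*} [CommRing R] [AddCommGroup M] [Module R M]
    [Module.Free R M] [Module.Finite R M] [AddCommGroup N] [Module R N] [Module.Free R N]
    [Module.Finite R N] (f : M →ₗ[R] N) (g : N →ₗ[R] M) {k : ℕ} (hk : k ≠ 0) :
    trace R M ((g ∘ₗ f) ^ k) = trace R N ((f ∘ₗ g) ^ k) := by
  obtain ⟨k, rfl⟩ := Nat.exists_eq_succ_of_ne_zero hk
  rw [comp_pow_succ, trace_comp_comm', pow_succ]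
  rfl

theorem add_pow_succ_of_mul_eq_zero {A : Type*} [Semiring A] {a b : A} (hab : a * b = 0)
    (hba : b * a = 0) (k : ℕ) : (a + b) ^ (k + 1) = a ^ (k + 1) + b ^ (k + 1) := by
  induction k with
  | zero => simp
  | succ k ih =>
    have hab' : a ^ (k + 1) * b = 0 := by rw [pow_succ, mul_assoc, hab, mul_zero]
    have hba' : b ^ (k + 1) * a = 0 := by rw [pow_succ, mul_assoc, hba, mul_zero]
    rw [pow_succ, ih, add_mul, mul_add, mul_add, hab', hba', add_zero, zero_add, ← pow_succ,
      ← pow_succ]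

theorem HasSum.sub_eq_of_eq_of_ne_zero {α : Type*} [AddCommGroup α] [TopologicalSpace α]
    [IsTopologicalAddGroup α] [T2Space α] {f g : ℕ → α} {a b : α} (hf : HasSum f a)
    (hg : HasSum g b) (h : ∀ k ≠ 0, f k = g k) : a - b = f 0 - g 0 :=
  (hf.sub hg).unique (hasSum_single 0 fun k hk => sub_eq_zero.mpr (h k hk))

theorem Finset.sum_range_neg_one_pow_mul_eq_add_of_telescoping {R : Type*} [CommRing R]
    {x y a : ℕ → R} (h₀ : x 0 = y 0 + a 0) (hsucc : ∀ p, x (p + 1) = y (p + 1) + (a (p + 1) + a p))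
    (n : ℕ) :
    ∑ p ∈ range (n + 1), (-1) ^ p * x p = ∑ p ∈ range (n + 1), (-1) ^ p * y p + (-1) ^ n * a n := by
  induction n with
  | zero => simp [h₀]
  | succ n ih =>
    rw [sum_range_succ, ih, hsucc, sum_range_succ _ (n + 1)]
    ring

theorem LinearMap.finrank_quotient_range_add_finrank_range {K U V W : Type*} [DivisionRing K]
    [AddCommGroup U] [Module K U] [AddCommGroup V] [Module K V] [FiniteDimensional K V]
    [AddCommGroup W] [Module K W] {f : U →ₗ[K] V} {g : V →ₗ[K] W} (hgf : g ∘ₗ f = 0) :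
    finrank K (ker g ⧸ (range f).comap (ker g).subtype) + finrank K (range f) =
      finrank K (ker g) := by
  have hfg : range f ≤ ker g := range_le_ker_iff.mpr hgf
  rw [← (Submodule.comapSubtypeEquivOfLe hfg).finrank_eq,
    Submodule.finrank_quotient_add_finrank]

section HeatTrace

variable {E F : Type} [NormedAddCommGroup E] [InnerProductSpace ℂ E] [FiniteDimensional ℂ E]
  [NormedAddCommGroup F] [InnerProductSpace ℂ F] [FiniteDimensional ℂ F]

theorem hasSum_heatTr (T : E →ₗ[ℂ] E) (t : ℝ) :
    HasSum (fun k => (k.factorial : ℂ)⁻¹ * (-t) ^ k * trace ℂ E (T ^ k)) (heatTr T t) := by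
  have hexp := NormedSpace.exp_series_hasSum_exp' (𝕂 := ℂ) ((-(t : ℂ)) • toContinuousLinearMap T)
  convert hexp.map (trace ℂ E ∘ₗ ContinuousLinearMap.coeLM ℂ)
    (LinearMap.continuous_of_finiteDimensional _) using 1
  · funext k
    simp only [Function.comp_apply, LinearMap.comp_apply, ContinuousLinearMap.coeLM_apply,
      smul_pow, ContinuousLinearMap.toLinearMap_pow,
      coe_toContinuousLinearMap, map_smul, smul_eq_mul]
    ring
  · rfl

theorem heatTr_sub_heatTr_of_trace_pow_eq (S : E →ₗ[ℂ] E) (T : F →ₗ[ℂ] F) (t : ℝ)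
    (h : ∀ k ≠ 0, trace ℂ E (S ^ k) = trace ℂ F (T ^ k)) :
    heatTr S t - heatTr T t = finrank ℂ E - finrank ℂ F := by
  rw [(hasSum_heatTr S t).sub_eq_of_eq_of_ne_zero (hasSum_heatTr T t) fun k hk => by rw [h k hk]]
  simp

theorem heatTr_comp_sub_finrank_comm (f : E →ₗ[ℂ] F) (g : F →ₗ[ℂ] E) (t : ℝ) :
    heatTr (g ∘ₗ f) t - finrank ℂ E = heatTr (f ∘ₗ g) t - finrank ℂ F := by
  rw [sub_eq_sub_iff_sub_eq_sub,
    heatTr_sub_heatTr_of_trace_pow_eq _ _ t fun k hk => trace_comp_pow_comm f g hk]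

theorem heatTr_add_of_mul_eq_zero {A B : E →ₗ[ℂ] E} (hAB : A * B = 0) (hBA : B * A = 0)
    (t : ℝ) : heatTr (A + B) t = heatTr A t + heatTr B t - finrank ℂ E := by
  have := ((hasSum_heatTr A t).add (hasSum_heatTr B t)).sub_eq_of_eq_of_ne_zero
    (hasSum_heatTr (A + B) t) fun k hk => by
      obtain ⟨k, rfl⟩ := Nat.exists_eq_succ_of_ne_zero hk
      rw [add_pow_succ_of_mul_eq_zero hAB hBA, map_add]
      ring
  simp only [Nat.factorial_zero, Nat.cast_one, inv_one, pow_zero, mul_one, trace_one, one_mul,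
    add_sub_cancel_right] at this
  linear_combination -this

theorem heatTr_zero (t : ℝ) : heatTr (0 : E →ₗ[ℂ] E) t = finrank ℂ E := by
  simp [heatTr]

variable {G : Type} [NormedAddCommGroup G] [InnerProductSpace ℂ G] [FiniteDimensional ℂ G]

theorem heatTr_adjoint_comp_add_comp_adjoint {f : E →ₗ[ℂ] F} {g : F →ₗ[ℂ] G}
    (hgf : g ∘ₗ f = 0) (t : ℝ) :
    heatTr (adjoint g ∘ₗ g + f ∘ₗ adjoint f) t =
      heatTr (adjoint g ∘ₗ g) t + heatTr (adjoint f ∘ₗ f) t - finrank ℂ E := by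
  have hfg : adjoint f ∘ₗ adjoint g = 0 := by rw [← adjoint_comp, hgf, map_zero]
  have h₁ : (adjoint g ∘ₗ g) * (f ∘ₗ adjoint f) = 0 := by
    rw [Module.End.mul_eq_comp, comp_assoc, ← comp_assoc (adjoint f), hgf, zero_comp, comp_zero]
  have h₂ : (f ∘ₗ adjoint f) * (adjoint g ∘ₗ g) = 0 := by
    rw [Module.End.mul_eq_comp, comp_assoc, ← comp_assoc g, hfg, zero_comp, comp_zero]
  rw [heatTr_add_of_mul_eq_zero h₁ h₂, add_sub_assoc, add_sub_assoc,
    ← heatTr_comp_sub_finrank_comm]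

end HeatTrace

section HilbertComplex

variable {C : ℕ → Type} [∀ p, NormedAddCommGroup (C p)] [∀ p, InnerProductSpace ℂ (C p)]
  [∀ p, FiniteDimensional ℂ (C p)] {d : ∀ p, C p →ₗ[ℂ] C (p + 1)}

theorem heatTr_lap_succ {p : ℕ} (hd : d (p + 1) ∘ₗ d p = 0) (t : ℝ) :
    heatTr (Lap C d (p + 1)) t = finrank ℂ (C (p + 1)) +
      ((heatTr (adjoint (d (p + 1)) ∘ₗ d (p + 1)) t - finrank ℂ (C (p + 1))) +
        (heatTr (adjoint (d p) ∘ₗ d p) t - finrank ℂ (C p))) := by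
  rw [Lap, heatTr_adjoint_comp_add_comp_adjoint hd]
  ring

theorem finrank_eq_hdim_zero_add :
    (finrank ℂ (C 0) : ℂ) = hdim C d 0 + finrank ℂ (range (d 0)) := by
  rw [hdim, ← (d 0).finrank_range_add_finrank_ker]
  push_cast
  ring

theorem finrank_eq_hdim_succ_add {p : ℕ} (hd : d (p + 1) ∘ₗ d p = 0) :
    (finrank ℂ (C (p + 1)) : ℂ) =
      hdim C d (p + 1) + (finrank ℂ (range (d (p + 1))) + finrank ℂ (range (d p))) := by
  rw [hdim, ← (d (p + 1)).finrank_range_add_finrank_ker,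
    ← finrank_quotient_range_add_finrank_range hd]
  push_cast
  ring

end HilbertComplex

theorem mcKean_singer_general (n : ℕ) (C : ℕ → Type) [∀ p, NormedAddCommGroup (C p)]
    [∀ p, InnerProductSpace ℂ (C p)] [∀ p, FiniteDimensional ℂ (C p)]
    (d : ∀ p, C p →ₗ[ℂ] C (p + 1))
    (hd : ∀ p, d (p + 1) ∘ₗ d p = 0)
    (htriv : ∀ p, n < p → Module.finrank ℂ (C p) = 0)
    (t : ℝ) :
    ∑ p ∈ Finset.range (n + 1), (-1 : ℂ) ^ p * heatTr (Lap C d p) t =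
      ∑ p ∈ Finset.range (n + 1), (-1 : ℂ) ^ p * (hdim C d p : ℂ) := by
  have hdn : d n = 0 :=
    have := finrank_zero_iff.mp (htriv (n + 1) n.lt_succ_self)
    Subsingleton.elim _ _
  have heat := sum_range_neg_one_pow_mul_eq_add_of_telescoping
    (x := fun p => heatTr (Lap C d p) t) (y := fun p => (finrank ℂ (C p) : ℂ))
    (a := fun p => heatTr (adjoint (d p) ∘ₗ d p) t - finrank ℂ (C p))
    (add_sub_cancel _ _).symm (fun p => heatTr_lap_succ (hd p) t) n
  have euler := sum_range_neg_one_pow_mul_eq_add_of_telescoping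
    (x := fun p => (finrank ℂ (C p) : ℂ)) (y := fun p => (hdim C d p : ℂ))
    (a := fun p => (finrank ℂ (range (d p)) : ℂ))
    finrank_eq_hdim_zero_add (fun p => finrank_eq_hdim_succ_add (hd p)) n
  have hrank : finrank ℂ (range (d n)) = 0 := by simp [hdn]
  simp only [hdn, map_zero, comp_zero, heatTr_zero, sub_self, hrank, Nat.cast_zero, mul_zero,
    add_zero] at heat euler
  rw [heat, euler]

/-- McKean–Singer: for a finite-dimensional Hilbert cochain complex
`0 → C⁰ → ⋯ → Cⁿ → 0` and every `t > 0`,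
`Σ_p (-1)^p Tr(exp(-t Δ_p)) = Σ_p (-1)^p dim H^p`. -/
theorem mcKean_singer (n : ℕ) (C : ℕ → Type) [∀ p, NormedAddCommGroup (C p)]
    [∀ p, InnerProductSpace ℂ (C p)] [∀ p, FiniteDimensional ℂ (C p)]
    (d : ∀ p, C p →ₗ[ℂ] C (p + 1))
    (hd : ∀ p, d (p + 1) ∘ₗ d p = 0)
    (htriv : ∀ p, n < p → Module.finrank ℂ (C p) = 0)
    (t : ℝ) (ht : 0 < t) :
    ∑ p ∈ Finset.range (n + 1), (-1 : ℂ) ^ p * heatTr (Lap C d p) t =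
      ∑ p ∈ Finset.range (n + 1), (-1 : ℂ) ^ p * (hdim C d p : ℂ) :=
  mcKean_singer_general n C d hd htriv t
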